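/- arXiv:1912.08242 — 3 statements merged into one kernel-verified Lean document; each statement's English description precedes it below -/
import Mathlib

section
/- Let u₀, u₁ : [0,T] → [ℓ,L] be measurable with 0 < ℓ < L, and let x solve ẋ = u₀(1 − x) − u₁x with x(0) ∈ [ℓ/(ℓ+L), L/(ℓ+L)]. Then x(t) ∈ [ℓ/(ℓ+L), L/(ℓ+L)] for all t ∈ [0,T], i.e., the interval [ℓ/(ℓ+L), L/(ℓ+L)] is forward-invariant. -/
open MeasureTheory intervalIntegral

/-- Integrability of the right-hand side on subintervals. -/
lemma stmt15_integrable (T ℓ L : ℝ) (hℓ : 0 < ℓ) (hℓL : ℓ < L)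
    (u₀ u₁ x : ℝ → ℝ)
    (hmeas0 : Measurable u₀) (hmeas1 : Measurable u₁)
    (hrange0 : ∀ t ∈ Set.Icc 0 T, u₀ t ∈ Set.Icc ℓ L)
    (hrange1 : ∀ t ∈ Set.Icc 0 T, u₁ t ∈ Set.Icc ℓ L)
    (hcont : ContinuousOn x (Set.Icc 0 T)) :
    ∀ a ∈ Set.Icc 0 T, ∀ b ∈ Set.Icc 0 T,
      IntervalIntegrable (fun s => u₀ s * (1 - x s) - u₁ s * x s) volume a b := by
  obtain ⟨C, hC⟩ := (isCompact_Icc (a := (0:ℝ)) (b := T)).exists_bound_of_continuousOn hcont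
  have hxm : AEMeasurable x (volume.restrict (Set.Icc (0:ℝ) T)) :=
    hcont.aemeasurable measurableSet_Icc
  have hInt : IntegrableOn (fun s => u₀ s * (1 - x s) - u₁ s * x s) (Set.Icc 0 T) volume := by
    have hm : AEStronglyMeasurable (fun s => u₀ s * (1 - x s) - u₁ s * x s)
        (volume.restrict (Set.Icc (0:ℝ) T)) := by
      exact ((hmeas0.aemeasurable.mul ((aemeasurable_const (b := (1:ℝ))).sub hxm)).sub
        (hmeas1.aemeasurable.mul hxm)).aestronglyMeasurable
    refine Integrable.mono' (g := fun _ => L * (1 + C) + L * C)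
      (integrable_const _) hm ?_
    refine (ae_restrict_iff' measurableSet_Icc).2 (Filter.Eventually.of_forall fun s hs => ?_)
    have h0 := hrange0 s hs
    have h1 := hrange1 s hs
    have hxs := hC s hs
    have habs : |x s| ≤ C := by simpa [Real.norm_eq_abs] using hxs
    have h1x : |1 - x s| ≤ 1 + C := by
      rcases abs_le.1 habs with ⟨hl, hr⟩
      rw [abs_le]; constructor <;> linarith
    have hu0 : |u₀ s| ≤ L := by
      rw [abs_le]; exact ⟨by linarith [h0.1], h0.2⟩
    have hu1 : |u₁ s| ≤ L := by
      rw [abs_le]; exact ⟨by linarith [h1.1], h1.2⟩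
    calc ‖u₀ s * (1 - x s) - u₁ s * x s‖
        ≤ |u₀ s * (1 - x s)| + |u₁ s * x s| := abs_sub _ _
      _ ≤ L * (1 + C) + L * C := by
          rw [abs_mul, abs_mul]
          have hC0 : 0 ≤ C := (abs_nonneg _).trans habs
          have := mul_le_mul hu0 h1x (abs_nonneg _) (by linarith : (0:ℝ) ≤ L)
          have := mul_le_mul hu1 habs (abs_nonneg _) (by linarith : (0:ℝ) ≤ L)
          linarith
  intro a ha b hb
  apply IntegrableOn.intervalIntegrable
  exact hInt.mono_set (Set.uIcc_subset_Icc ha hb)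

/-- Upper bound half of the invariance statement. -/
lemma stmt15_upper (T ℓ L : ℝ) (hℓ : 0 < ℓ) (hℓL : ℓ < L)
    (u₀ u₁ x : ℝ → ℝ)
    (hmeas0 : Measurable u₀) (hmeas1 : Measurable u₁)
    (hrange0 : ∀ t ∈ Set.Icc 0 T, u₀ t ∈ Set.Icc ℓ L)
    (hrange1 : ∀ t ∈ Set.Icc 0 T, u₁ t ∈ Set.Icc ℓ L)
    (hcont : ContinuousOn x (Set.Icc 0 T))
    (hode : ∀ t ∈ Set.Icc 0 T,
      x t = x 0 + ∫ s in (0:ℝ)..t, (u₀ s * (1 - x s) - u₁ s * x s))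
    (hinit : x 0 ≤ L / (ℓ + L)) :
    ∀ t ∈ Set.Icc 0 T, x t ≤ L / (ℓ + L) := by
  have hℓL0 : 0 < ℓ + L := by linarith
  set M : ℝ := L / (ℓ + L) with hM
  set g : ℝ → ℝ := fun s => u₀ s * (1 - x s) - u₁ s * x s with hg
  have hInt := stmt15_integrable T ℓ L hℓ hℓL u₀ u₁ x hmeas0 hmeas1 hrange0 hrange1 hcont
  -- key sign fact
  have key : ∀ s ∈ Set.Icc 0 T, M ≤ x s → g s ≤ 0 := by
    intro s hs hxs
    have h0 := hrange0 s hs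
    have h1 := hrange1 s hs
    have hMx : L ≤ (ℓ + L) * x s := by
      rw [hM, div_le_iff₀ hℓL0] at hxs; linarith [hxs]
    rcases le_or_gt (x s) 1 with hx1 | hx1
    · have e1 : u₀ s * (1 - x s) ≤ L * (1 - x s) := by nlinarith [h0.2]
      have e2 : ℓ * x s ≤ u₁ s * x s := by nlinarith [h1.1]
      have e3 : L * (1 - x s) ≤ ℓ * x s := by nlinarith
      simp only [hg]; linarith
    · have e1 : u₀ s * (1 - x s) ≤ 0 := by nlinarith [h0.1]
      have e2 : 0 ≤ u₁ s * x s := by nlinarith [h1.1]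
      simp only [hg]; linarith
  intro t ht
  by_contra hcon
  push_neg at hcon
  -- t > 0
  have ht0 : 0 < t := by
    rcases ht.1.lt_or_eq with h | h
    · exact h
    · exfalso; rw [← h] at hcon; simp only [hM] at hcon; linarith
  set A : Set ℝ := {s | s ∈ Set.Icc 0 t ∧ x s ≤ M} with hA
  have hA0 : (0:ℝ) ∈ A := ⟨⟨le_refl _, ht0.le⟩, hinit⟩
  have hAne : A.Nonempty := ⟨0, hA0⟩
  have hAsub : A ⊆ Set.Icc 0 t := fun s hs => hs.1
  have hAbdd : BddAbove A := ⟨t, fun s hs => hs.1.2⟩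
  have hAclosed : IsClosed A := by
    have : A = Set.Icc 0 t ∩ x ⁻¹' Set.Iic M := by
      ext s; simp [hA, Set.mem_Icc, and_assoc]
    rw [this]
    exact ContinuousOn.preimage_isClosed_of_isClosed
      (hcont.mono (Set.Icc_subset_Icc le_rfl ht.2)) isClosed_Icc isClosed_Iic
  set t₀ := sSup A with ht₀
  have ht₀A : t₀ ∈ A :=
    (isCompact_Icc.of_isClosed_subset hAclosed hAsub).sSup_mem hAne
  have ht₀Icc : t₀ ∈ Set.Icc 0 t := hAsub ht₀A
  have ht₀T : t₀ ∈ Set.Icc 0 T := ⟨ht₀Icc.1, ht₀Icc.2.trans ht.2⟩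
  have ht₀lt : t₀ < t := by
    rcases ht₀Icc.2.lt_or_eq with h | h
    · exact h
    · exfalso; have := ht₀A.2; rw [h] at this; linarith
  have hgt : ∀ s ∈ Set.Ioc t₀ t, M < x s := by
    intro s hs
    by_contra hle
    push_neg at hle
    have : s ∈ A := ⟨⟨ht₀Icc.1.trans hs.1.le, hs.2⟩, hle⟩
    exact absurd (le_csSup hAbdd this) (not_le.2 hs.1)
  -- x t₀ ≥ M by continuity from the right
  have hxt₀ : M ≤ x t₀ := by
    have htend : Filter.Tendsto x (nhdsWithin t₀ (Set.Ioc t₀ t)) (nhds (x t₀)) := by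
      refine ((hcont t₀ ht₀T).mono ?_).tendsto
      intro u hu
      exact ⟨ht₀Icc.1.trans hu.1.le, hu.2.trans ht.2⟩
    have : Filter.NeBot (nhdsWithin t₀ (Set.Ioc t₀ t)) := by
      apply IsGLB.nhdsWithin_neBot (isGLB_Ioc ht₀lt)
      exact Set.nonempty_Ioc.2 ht₀lt
    exact ge_of_tendsto htend (Filter.eventually_iff_exists_mem.2
      ⟨Set.Ioc t₀ t, self_mem_nhdsWithin, fun u hu => (hgt u hu).le⟩)
  -- pointwise nonpositivity on [t₀, t]
  have hsign : ∀ s ∈ Set.Icc t₀ t, g s ≤ 0 := by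
    intro s hs
    have hsT : s ∈ Set.Icc 0 T := ⟨ht₀Icc.1.trans hs.1, hs.2.trans ht.2⟩
    rcases hs.1.lt_or_eq with h | h
    · exact key s hsT (hgt s ⟨h, hs.2⟩).le
    · rw [← h]; exact key t₀ ht₀T hxt₀
  have hint1 := hInt 0 ⟨le_refl _, (by linarith [ht.2] : (0:ℝ) ≤ T)⟩ t ht
  have hint0 := hInt 0 ⟨le_refl _, (by linarith [ht.2] : (0:ℝ) ≤ T)⟩ t₀ ht₀T
  have hsub : x t - x t₀ = ∫ s in t₀..t, g s := by
    rw [hode t ht, hode t₀ ht₀T]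
    have := intervalIntegral.integral_interval_sub_left hint1 hint0
    simp only [hg] at this ⊢
    linarith [this]
  have hle : (∫ s in t₀..t, g s) ≤ 0 := by
    rw [show (∫ s in t₀..t, g s) = -∫ s in t₀..t, (-g s) by
      rw [intervalIntegral.integral_neg]; ring]
    have : 0 ≤ ∫ s in t₀..t, (-g s) :=
      intervalIntegral.integral_nonneg ht₀lt.le (fun u hu => by linarith [hsign u hu])
    linarith
  have := ht₀A.2
  linarith [hsub, hle, hcon]

/-- The interval [ℓ/(ℓ+L), L/(ℓ+L)] is forward-invariant for the occupancy
model ẋ = u₀(1−x) − u₁x with u₀, u₁ taking values in [ℓ,L], 0 < ℓ < L. -/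
theorem stmt15 (T ℓ L : ℝ) (hT : 0 < T) (hℓ : 0 < ℓ) (hℓL : ℓ < L)
    (u₀ u₁ x : ℝ → ℝ)
    (hmeas0 : Measurable u₀) (hmeas1 : Measurable u₁)
    (hrange0 : ∀ t ∈ Set.Icc 0 T, u₀ t ∈ Set.Icc ℓ L)
    (hrange1 : ∀ t ∈ Set.Icc 0 T, u₁ t ∈ Set.Icc ℓ L)
    (hcont : ContinuousOn x (Set.Icc 0 T))
    (hode : ∀ t ∈ Set.Icc 0 T,
      x t = x 0 + ∫ s in (0:ℝ)..t, (u₀ s * (1 - x s) - u₁ s * x s))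
    (hinit : x 0 ∈ Set.Icc (ℓ / (ℓ + L)) (L / (ℓ + L))) :
    ∀ t ∈ Set.Icc 0 T, x t ∈ Set.Icc (ℓ / (ℓ + L)) (L / (ℓ + L)) := by
  have hℓL0 : 0 < ℓ + L := by linarith
  intro t ht
  constructor
  · -- lower bound via y = 1 - x
    have hy : ∀ s ∈ Set.Icc 0 T, (fun s => 1 - x s) s =
        (fun s => 1 - x s) 0 + ∫ s in (0:ℝ)..s,
          (u₁ s * (1 - (1 - x s)) - u₀ s * (1 - x s)) := by
      intro s hs
      have h := hode s hs
      have : (fun s => u₁ s * (1 - (1 - x s)) - u₀ s * (1 - x s)) =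
          fun s => -(u₀ s * (1 - x s) - u₁ s * x s) := by
        funext u; ring
      rw [this, intervalIntegral.integral_neg]
      simp only
      linarith [h]
    have hupper := stmt15_upper T ℓ L hℓ hℓL u₁ u₀ (fun s => 1 - x s)
      hmeas1 hmeas0 hrange1 hrange0
      (continuousOn_const.sub hcont) hy
      (by
        have h1 := hinit.1
        have hsum : ℓ / (ℓ + L) + L / (ℓ + L) = 1 := by field_simp
        linarith)
    have := hupper t ht
    have hsum : ℓ / (ℓ + L) + L / (ℓ + L) = 1 := by field_simp
    linarith
  · exact stmt15_upper T ℓ L hℓ hℓL u₀ u₁ x hmeas0 hmeas1 hrange0 hrange1 hcont hode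
      hinit.2 t ht
end

section
/- Let x solve ẋ = u₀(1 − x) − u₁x on [0,T] with measurable u₀, u₁ : [0,T] → [ℓ,L], 0 < ℓ < L, and x(0) = x(T) (periodic boundary condition). Then x(0) ∈ [ℓ/(ℓ+L), L/(ℓ+L)]. -/
open MeasureTheory intervalIntegral

/-- Upper bound lemma: x(0) ≤ L/(ℓ+L). -/
lemma stmt16_aux (T ℓ L : ℝ) (hT : 0 < T) (hℓ : 0 < ℓ) (hℓL : ℓ < L)
    (u₀ u₁ x : ℝ → ℝ)
    (hmeas0 : Measurable u₀) (hmeas1 : Measurable u₁)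
    (hrange0 : ∀ t ∈ Set.Icc 0 T, u₀ t ∈ Set.Icc ℓ L)
    (hrange1 : ∀ t ∈ Set.Icc 0 T, u₁ t ∈ Set.Icc ℓ L)
    (hcont : ContinuousOn x (Set.Icc 0 T))
    (hode : ∀ t ∈ Set.Icc 0 T,
      x t = x 0 + ∫ s in (0:ℝ)..t, (u₀ s * (1 - x s) - u₁ s * x s))
    (hper : x 0 = x T) :
    x 0 ≤ L / (ℓ + L) := by
  set c : ℝ := L / (ℓ + L) with hc
  have hℓL' : (0:ℝ) < ℓ + L := by linarith
  by_contra hx0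
  push_neg at hx0  -- c < x 0
  set f : ℝ → ℝ := fun s => u₀ s * (1 - x s) - u₁ s * x s with hf
  -- pointwise negativity
  have hneg : ∀ s ∈ Set.Icc (0:ℝ) T, c < x s → f s < 0 := by
    intro s hs hxs
    obtain ⟨h0l, h0u⟩ := hrange0 s hs
    obtain ⟨h1l, h1u⟩ := hrange1 s hs
    have hxpos : 0 < x s := (div_pos (by linarith) hℓL').trans hxs
    rcases le_or_gt (x s) 1 with h1 | h1
    · have hA : u₀ s * (1 - x s) ≤ L * (1 - x s) :=
        mul_le_mul_of_nonneg_right h0u (by linarith)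
      have hB : ℓ * x s ≤ u₁ s * x s := mul_le_mul_of_nonneg_right h1l hxpos.le
      have : L < (ℓ + L) * x s := by
        have := (div_lt_iff₀ hℓL').mp hxs
        linarith
      simp only [hf]
      nlinarith
    · have hA : u₀ s * (1 - x s) ≤ ℓ * (1 - x s) :=
        mul_le_mul_of_nonpos_right h0l (by linarith)
      have hB : 0 < u₁ s * x s := mul_pos (by linarith) hxpos
      simp only [hf]
      nlinarith
  -- integrability
  obtain ⟨C, hC⟩ := (isCompact_Icc : IsCompact (Set.Icc (0:ℝ) T)).exists_bound_of_continuousOn hcont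
  have hInt : IntegrableOn f (Set.Icc 0 T) := by
    have hxm : AEMeasurable x (volume.restrict (Set.Icc (0:ℝ) T)) :=
      hcont.aemeasurable measurableSet_Icc
    have hfm : AEStronglyMeasurable f (volume.restrict (Set.Icc (0:ℝ) T)) := by
      exact ((hmeas0.aemeasurable.mul ((aemeasurable_const (b := (1:ℝ))).sub hxm)).sub
        (hmeas1.aemeasurable.mul hxm)).aestronglyMeasurable
    refine Integrable.mono' (g := fun _ => L * (1 + |C|) + L * |C|)
      (integrableOn_const measure_Icc_lt_top.ne) hfm ?_
    rw [ae_restrict_iff' measurableSet_Icc]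
    filter_upwards with s hs
    obtain ⟨h0l, h0u⟩ := hrange0 s hs
    obtain ⟨h1l, h1u⟩ := hrange1 s hs
    have hxb : |x s| ≤ |C| := (hC s hs).trans (le_abs_self C)
    have h0abs : |u₀ s| ≤ L := by rw [abs_le]; constructor <;> linarith
    have h1abs : |u₁ s| ≤ L := by rw [abs_le]; constructor <;> linarith
    have : |f s| ≤ |u₀ s| * |1 - x s| + |u₁ s| * |x s| := by
      simp only [hf]
      calc |u₀ s * (1 - x s) - u₁ s * x s| ≤ |u₀ s * (1 - x s)| + |u₁ s * x s| :=
            abs_sub _ _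
        _ = |u₀ s| * |1 - x s| + |u₁ s| * |x s| := by rw [abs_mul, abs_mul]
    have h1x : |1 - x s| ≤ 1 + |C| := by
      calc |1 - x s| ≤ |1| + |x s| := abs_sub _ _
        _ ≤ 1 + |C| := by simp; linarith [hxb]
    have hL0 : (0:ℝ) ≤ L := by linarith
    calc ‖f s‖ = |f s| := rfl
      _ ≤ |u₀ s| * |1 - x s| + |u₁ s| * |x s| := this
      _ ≤ L * (1 + |C|) + L * |C| := by
          have e1 := mul_le_mul h0abs h1x (abs_nonneg _) hL0
          have e2 := mul_le_mul h1abs hxb (abs_nonneg _) hL0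
          linarith
  have hII : ∀ a b : ℝ, 0 ≤ a → a ≤ b → b ≤ T → IntervalIntegrable f volume a b := by
    intro a b ha hab hb
    rw [intervalIntegrable_iff]
    refine hInt.mono_set (fun s hs => ?_)
    rcases Set.mem_uIoc.mp hs with ⟨h1, h2⟩ | ⟨h1, h2⟩ <;> exact ⟨by linarith, by linarith⟩
  -- key: if x stays above c on (t₁, T], then x T < x t₁
  have key : ∀ t₁, t₁ ∈ Set.Icc (0:ℝ) T → t₁ < T → (∀ s ∈ Set.Ioc t₁ T, c < x s) →
      x T < x t₁ := by
    intro t₁ ht₁ ht₁T hpos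
    have hii := hII t₁ T ht₁.1 ht₁T.le le_rfl
    have h1 : ∫ s in t₁..T, f s = x T - x t₁ := by
      have e1 := hode t₁ ht₁
      have e2 := hode T ⟨hT.le, le_rfl⟩
      have hadd := intervalIntegral.integral_add_adjacent_intervals
        (hII 0 t₁ le_rfl ht₁.1 ht₁.2) hii
      have e3 : x T - x t₁ = (∫ s in (0:ℝ)..T, f s) - ∫ s in (0:ℝ)..t₁, f s := by
        rw [e1, e2]; ring
      rw [e3, ← hadd]; ring
    have hlt : 0 < ∫ s in t₁..T, -f s := by
      apply intervalIntegral_pos_of_pos_on hii.neg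
      · intro s hs
        have hsm : s ∈ Set.Ioc t₁ T := ⟨hs.1, hs.2.le⟩
        have : f s < 0 := hneg s ⟨le_trans ht₁.1 hsm.1.le, hsm.2⟩ (hpos s hsm)
        simpa using this
      · exact ht₁T
    rw [intervalIntegral.integral_neg, h1] at hlt
    linarith
  -- the set where x ≤ c
  set S : Set ℝ := Set.Icc 0 T ∩ x ⁻¹' Set.Iic c with hS
  have hSbdd : BddAbove S := ⟨T, fun s hs => hs.1.2⟩
  have hSclosed : IsClosed S := hcont.preimage_isClosed_of_isClosed isClosed_Icc isClosed_Iic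
  rcases S.eq_empty_or_nonempty with hSe | hSne
  · have hall : ∀ s ∈ Set.Icc (0:ℝ) T, c < x s := by
      intro s hs
      by_contra h; push_neg at h
      exact Set.eq_empty_iff_forall_notMem.mp hSe s ⟨hs, h⟩
    have hk := key 0 ⟨le_rfl, hT.le⟩ hT (fun s hs => hall s ⟨hs.1.le, hs.2⟩)
    rw [← hper] at hk; exact lt_irrefl _ hk
  · set t₁ := sSup S with ht₁def
    have ht₁mem : t₁ ∈ S := hSclosed.csSup_mem hSne hSbdd
    have hxt₁ : x t₁ ≤ c := ht₁mem.2
    have ht₁T : t₁ < T := lt_of_le_of_ne ht₁mem.1.2 (by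
      intro h
      rw [h] at hxt₁
      rw [← hper] at hxt₁
      linarith)
    have hpos : ∀ s ∈ Set.Ioc t₁ T, c < x s := by
      intro s hs
      by_contra h; push_neg at h
      have hsS : s ∈ S := ⟨⟨le_trans ht₁mem.1.1 hs.1.le, hs.2⟩, h⟩
      exact absurd (le_csSup hSbdd hsS) (not_le.mpr hs.1)
    have hk := key t₁ ht₁mem.1 ht₁T hpos
    rw [← hper] at hk
    linarith

/-- A periodic solution x(0) = x(T) of the occupancy model with inputs in [ℓ,L]
must start (and hence stay) in [ℓ/(ℓ+L), L/(ℓ+L)]. -/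
theorem stmt16 (T ℓ L : ℝ) (hT : 0 < T) (hℓ : 0 < ℓ) (hℓL : ℓ < L)
    (u₀ u₁ x : ℝ → ℝ)
    (hmeas0 : Measurable u₀) (hmeas1 : Measurable u₁)
    (hrange0 : ∀ t ∈ Set.Icc 0 T, u₀ t ∈ Set.Icc ℓ L)
    (hrange1 : ∀ t ∈ Set.Icc 0 T, u₁ t ∈ Set.Icc ℓ L)
    (hcont : ContinuousOn x (Set.Icc 0 T))
    (hode : ∀ t ∈ Set.Icc 0 T,
      x t = x 0 + ∫ s in (0:ℝ)..t, (u₀ s * (1 - x s) - u₁ s * x s))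
    (hper : x 0 = x T) :
    x 0 ∈ Set.Icc (ℓ / (ℓ + L)) (L / (ℓ + L)) := by
  have hℓL' : (0:ℝ) < ℓ + L := by linarith
  constructor
  · -- lower bound via the substitution y = 1 - x
    have hodey : ∀ t ∈ Set.Icc (0:ℝ) T,
        (fun t => 1 - x t) t = (fun t => 1 - x t) 0 +
          ∫ s in (0:ℝ)..t, (u₁ s * (1 - (fun t => 1 - x t) s) - u₀ s * (fun t => 1 - x t) s) := by
      intro t ht
      have e := hode t ht
      simp only
      have hfe : (fun s => u₁ s * (1 - (1 - x s)) - u₀ s * (1 - x s)) =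
          fun s => -(u₀ s * (1 - x s) - u₁ s * x s) := funext fun s => by ring
      rw [hfe, intervalIntegral.integral_neg]
      linarith
    have hy := stmt16_aux T ℓ L hT hℓ hℓL u₁ u₀ (fun t => 1 - x t)
      hmeas1 hmeas0 hrange1 hrange0 (continuousOn_const.sub hcont) hodey
      (by simp [hper])
    have he : ℓ / (ℓ + L) = 1 - L / (ℓ + L) := by field_simp; ring
    linarith
  · exact stmt16_aux T ℓ L hT hℓ hℓL u₀ u₁ x hmeas0 hmeas1 hrange0 hrange1 hcont hode hper
end

section
/- Fix T > 0, 0 < ℓ < L, ū₀, ū₁ ∈ (ℓ, L). Among all measurable controls u₀, u₁ : [0,T] → [ℓ,L] with (1/T)∫₀ᵀ u₀ = ū₀ and (1/T)∫₀ᵀ u₁ = ū₁, and all absolutely continuous x : [0,T] → [0,1] satisfying ẋ = u₀(1 − x) − u₁x a.e. and x(0) = x(T), the cost J = (1/T)∫₀ᵀ u₁(t)x(t) dt satisfies J ≤ ū₀ū₁/(ū₀ + ū₁), with equality attained by the constant controls u₀ ≡ ū₀, u₁ ≡ ū₁ and constant state x ≡ ū₀/(ū₀+ū₁). -/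
open MeasureTheory intervalIntegral Set

lemma stmt19_ii_of_bdd {T : ℝ} (g : ℝ → ℝ) (M : ℝ)
    (hmeas : AEMeasurable g (volume.restrict (Icc 0 T)))
    (hb : ∀ s ∈ Icc (0:ℝ) T, |g s| ≤ M)
    {a b : ℝ} (ha : a ∈ Icc (0:ℝ) T) (hbb : b ∈ Icc (0:ℝ) T) :
    IntervalIntegrable g volume a b := by
  have hsub : uIcc a b ⊆ Icc 0 T := Set.uIcc_subset_Icc ha hbb
  have hInt : IntegrableOn g (Icc 0 T) := by
    refine Integrable.mono' (integrable_const M) hmeas.aestronglyMeasurable ?_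
    rw [ae_restrict_iff' measurableSet_Icc]
    exact ae_of_all _ (fun s hs => by simpa using hb s hs)
  exact (hInt.mono_set hsub).intervalIntegrable

section Main
variable {T ℓ L : ℝ} {u₀ u₁ x : ℝ → ℝ}

set_option maxHeartbeats 2000000 in
/-- Key inequality for the occupancy model. -/
lemma stmt19_key {ubar0 ubar1 : ℝ} (hT : 0 < T) (hℓ : 0 < ℓ) (hℓL : ℓ < L)
    (h0 : ubar0 ∈ Set.Ioo ℓ L) (h1 : ubar1 ∈ Set.Ioo ℓ L)
    (hm0 : Measurable u₀) (hm1 : Measurable u₁)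
    (hb0 : ∀ t ∈ Icc (0:ℝ) T, u₀ t ∈ Icc ℓ L)
    (hb1 : ∀ t ∈ Icc (0:ℝ) T, u₁ t ∈ Icc ℓ L)
    (havg0 : (1 / T) * (∫ t in (0:ℝ)..T, u₀ t) = ubar0)
    (havg1 : (1 / T) * (∫ t in (0:ℝ)..T, u₁ t) = ubar1)
    (hxc : ContinuousOn x (Icc 0 T))
    (hx01 : ∀ t ∈ Icc (0:ℝ) T, x t ∈ Icc (0:ℝ) 1)
    (hode : ∀ t ∈ Icc (0:ℝ) T,
      x t = x 0 + ∫ s in (0:ℝ)..t, (u₀ s * (1 - x s) - u₁ s * x s))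
    (hper : x 0 = x T) :
    (1 / T) * (∫ t in (0:ℝ)..T, u₁ t * x t) ≤ ubar0 * ubar1 / (ubar0 + ubar1) := by
  have hLpos : 0 < L := hℓ.trans hℓL
  have hsum : 0 < ℓ + L := by linarith
  set c : ℝ := ℓ / (ℓ + L) with hc_def
  have hc0 : 0 < c := div_pos hℓ hsum
  have hcsum : (ℓ + L) * c = ℓ := by rw [hc_def]; field_simp
  set f : ℝ → ℝ := fun s => u₀ s * (1 - x s) - u₁ s * x s with hf_def
  have hxA : AEMeasurable x (volume.restrict (Icc 0 T)) :=
    hxc.aemeasurable measurableSet_Icc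
  have hfA : AEMeasurable f (volume.restrict (Icc 0 T)) :=
    ((hm0.aemeasurable.mul (aemeasurable_const.sub hxA)).sub
      (hm1.aemeasurable.mul hxA))
  have hfb : ∀ s ∈ Icc (0:ℝ) T, |f s| ≤ 2 * L := by
    intro s hs
    have h₀ := hb0 s hs; have h₁ := hb1 s hs; have hx := hx01 s hs
    have e0 : 0 ≤ u₀ s * (1 - x s) := mul_nonneg (hℓ.le.trans h₀.1) (by linarith [hx.2])
    have e1 : u₀ s * (1 - x s) ≤ L := by
      nlinarith [mul_nonneg (sub_nonneg.2 h₀.2) (sub_nonneg.2 hx.2),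
        mul_nonneg hLpos.le hx.1]
    have e2 : 0 ≤ u₁ s * x s := mul_nonneg (hℓ.le.trans h₁.1) hx.1
    have e3 : u₁ s * x s ≤ L := by
      nlinarith [mul_nonneg (sub_nonneg.2 h₁.2) hx.1, mul_nonneg hLpos.le (sub_nonneg.2 hx.2)]
    rw [abs_le]
    constructor <;> simp only [hf_def] <;> linarith
  have hfint : ∀ a b, a ∈ Icc (0:ℝ) T → b ∈ Icc (0:ℝ) T →
      IntervalIntegrable f volume a b :=
    fun a b ha hb => stmt19_ii_of_bdd f (2 * L) hfA hfb ha hb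
  have h0mem : (0:ℝ) ∈ Icc (0:ℝ) T := ⟨le_refl 0, hT.le⟩
  have hTmem : T ∈ Icc (0:ℝ) T := ⟨hT.le, le_refl T⟩
  have hode' : ∀ s t, s ∈ Icc (0:ℝ) T → t ∈ Icc (0:ℝ) T →
      x t = x s + ∫ r in s..t, f r := by
    intro s t hs ht
    have h1 := hode s hs; have h2 := hode t ht
    have h3 : (∫ r in (0:ℝ)..s, f r) + ∫ r in s..t, f r = ∫ r in (0:ℝ)..t, f r :=
      integral_add_adjacent_intervals (hfint 0 s h0mem hs) (hfint s t hs ht)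
    linarith
  have hglb : ∀ s ∈ Icc (0:ℝ) T, ℓ * (1 - x s) - L * x s ≤ f s := by
    intro s hs
    have h₀ := hb0 s hs; have h₁ := hb1 s hs; have hx := hx01 s hs
    have e1 : ℓ * (1 - x s) ≤ u₀ s * (1 - x s) :=
      mul_le_mul_of_nonneg_right h₀.1 (by linarith [hx.2])
    have e2 : u₁ s * x s ≤ L * x s := mul_le_mul_of_nonneg_right h₁.2 hx.1
    simp only [hf_def]; linarith
  -- invariance of [b, 1] for b ≤ c
  have hinv : ∀ b, b ≤ c → ∀ s t, s ∈ Icc (0:ℝ) T → t ∈ Icc (0:ℝ) T → s ≤ t →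
      b ≤ x s → b ≤ x t := by
    intro b hbc s t hs ht hst hxs
    by_contra hlt; push_neg at hlt
    set A : Set ℝ := {r | r ∈ Icc s t ∧ b ≤ x r} with hA_def
    have hA_ne : A.Nonempty := ⟨s, ⟨le_refl s, hst⟩, hxs⟩
    have hA_bdd : BddAbove A := ⟨t, fun r hr => hr.1.2⟩
    have hA_closed : IsClosed A := by
      have hxcont : ContinuousOn x (Icc s t) :=
        hxc.mono (Icc_subset_Icc hs.1 ht.2)
      have : A = Icc s t ∩ x ⁻¹' Ici b := by
        ext r; simp [hA_def, Set.mem_setOf_eq, and_comm]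
      rw [this]
      exact hxcont.preimage_isClosed_of_isClosed isClosed_Icc isClosed_Ici
    set t₁ := sSup A with ht₁_def
    have ht₁A : t₁ ∈ A := hA_closed.csSup_mem hA_ne hA_bdd
    have hst₁ : s ≤ t₁ := ht₁A.1.1
    have ht₁t : t₁ ≤ t := ht₁A.1.2
    have ht₁Icc : t₁ ∈ Icc (0:ℝ) T := ⟨hs.1.trans hst₁, ht₁t.trans ht.2⟩
    have hxt₁ : b ≤ x t₁ := ht₁A.2
    have hsmall : ∀ r, t₁ < r → r ≤ t → x r < b := by
      intro r hr1 hr2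
      by_contra hge; push_neg at hge
      have hrA : r ∈ A := ⟨⟨hst₁.trans hr1.le, hr2⟩, hge⟩
      exact absurd (le_csSup hA_bdd hrA) (not_le.2 hr1)
    have hxeq : x t = x t₁ + ∫ r in t₁..t, f r := hode' t₁ t ht₁Icc ht
    have hnn : 0 ≤ ∫ r in t₁..t, f r := by
      apply integral_nonneg_of_ae_restrict ht₁t
      rw [Filter.EventuallyLE, ae_restrict_iff' measurableSet_Icc]
      have hne : ∀ᵐ r ∂(volume : Measure ℝ), r ≠ t₁ := by
        rw [ae_iff]
        simp only [not_not, Set.setOf_eq_eq_singleton]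
        exact Real.volume_singleton
      filter_upwards [hne] with r hrne hrIcc
      have hrt : t₁ < r := lt_of_le_of_ne hrIcc.1 (Ne.symm hrne)
      have hxr : x r < b := hsmall r hrt hrIcc.2
      have hrIcc0T : r ∈ Icc (0:ℝ) T := ⟨ht₁Icc.1.trans hrIcc.1, hrIcc.2.trans ht.2⟩
      have hg := hglb r hrIcc0T
      have hxrc : x r ≤ c := hxr.le.trans hbc
      simp only [Pi.zero_apply]
      nlinarith [mul_nonneg hsum.le (sub_nonneg.2 hxrc)]
    linarith
  -- x 0 ≥ c
  have hx0 : c ≤ x 0 := by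
    by_contra hlt; push_neg at hlt
    set b' : ℝ := (x 0 + c) / 2 with hb'_def
    have hb'c : b' < c := by simp only [hb'_def]; linarith
    have hx0b' : x 0 < b' := by simp only [hb'_def]; linarith
    by_cases hcase : ∃ s ∈ Icc (0:ℝ) T, b' ≤ x s
    · obtain ⟨s, hsmem, hxs⟩ := hcase
      have := hinv b' hb'c.le s T hsmem hTmem hsmem.2 hxs
      rw [← hper] at this; linarith
    · push_neg at hcase
      have hpos : 0 < ℓ - (ℓ + L) * b' := by nlinarith
      have hlow : ∀ s ∈ Icc (0:ℝ) T, ℓ - (ℓ + L) * b' ≤ f s := by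
        intro s hsmem
        have h1 := hglb s hsmem
        have h2 := (hcase s hsmem).le
        have h3 := (hx01 s hsmem).1
        nlinarith
      have hmono : (ℓ - (ℓ + L) * b') * T ≤ ∫ r in (0:ℝ)..T, f r := by
        have h := integral_mono_on hT.le intervalIntegrable_const
          (hfint 0 T h0mem hTmem) hlow
        rwa [intervalIntegral.integral_const, sub_zero, smul_eq_mul, mul_comm] at h
      have hend := hode' 0 T h0mem hTmem
      rw [← hper] at hend
      nlinarith
  have hxlb : ∀ t ∈ Icc (0:ℝ) T, c ≤ x t :=
    fun t ht => hinv c le_rfl 0 t h0mem ht ht.1 hx0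
  clear hinv hx0
  have hxlb1 : ∀ s ∈ Icc (0:ℝ) T, 0 < x s := fun s hs => hc0.trans_le (hxlb s hs)
  set φ : ℝ → ℝ := fun s => f s * (x s)⁻¹ with hφ_def
  have hφA : AEMeasurable φ (volume.restrict (Icc 0 T)) := hfA.mul hxA.inv
  have hxinv_le : ∀ s ∈ Icc (0:ℝ) T, |(x s)⁻¹| ≤ c⁻¹ := by
    intro s hs
    rw [abs_inv, abs_of_pos (hxlb1 s hs)]
    exact inv_anti₀ hc0 (hxlb s hs)
  have hφb : ∀ s ∈ Icc (0:ℝ) T, |φ s| ≤ 2 * L * c⁻¹ := by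
    intro s hs
    simp only [hφ_def]
    rw [abs_mul]
    exact mul_le_mul (hfb s hs) (hxinv_le s hs) (abs_nonneg _) (by positivity)
  have hφint : ∀ a b, a ∈ Icc (0:ℝ) T → b ∈ Icc (0:ℝ) T →
      IntervalIntegrable φ volume a b :=
    fun a b ha hb => stmt19_ii_of_bdd φ (2 * L * c⁻¹) hφA hφb ha hb
  -- Lipschitz bound for x
  have hxlip : ∀ s t, s ∈ Icc (0:ℝ) T → t ∈ Icc (0:ℝ) T → s ≤ t →
      |x t - x s| ≤ 2 * L * (t - s) := by
    intro s t hs ht hst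
    have h := hode' s t hs ht
    have heq : x t - x s = ∫ r in s..t, f r := by linarith
    have h2 : ‖∫ r in s..t, f r‖ ≤ 2 * L * |t - s| := by
      apply intervalIntegral.norm_integral_le_of_norm_le_const
      intro r hr
      rw [Set.uIoc_of_le hst] at hr
      have hrm : r ∈ Icc (0:ℝ) T := ⟨hs.1.trans hr.1.le, hr.2.trans ht.2⟩
      simpa [Real.norm_eq_abs] using hfb r hrm
    rw [heq]
    rw [Real.norm_eq_abs, abs_of_nonneg (sub_nonneg.2 hst)] at h2
    exact h2
  -- per piece estimate
  have hpiece : ∀ pa pb, pa ∈ Icc (0:ℝ) T → pb ∈ Icc (0:ℝ) T → pa ≤ pb →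
      (∫ s in pa..pb, φ s) ≤ Real.log (x pb) - Real.log (x pa)
        + 4 * L ^ 2 * (c⁻¹ * c⁻¹) * (pb - pa) ^ 2 := by
    intro pa pb hpa hpb hab
    have hxaP : 0 < x pa := hxlb1 pa hpa
    have hxbP : 0 < x pb := hxlb1 pb hpb
    have hint_f : x pb - x pa = ∫ r in pa..pb, f r := by
      have := hode' pa pb hpa hpb; linarith
    set ψ : ℝ → ℝ := fun s => f s * ((x s)⁻¹ - (x pb)⁻¹) with hψ_def
    have hψA : AEMeasurable ψ (volume.restrict (Icc 0 T)) :=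
      hfA.mul (hxA.inv.sub aemeasurable_const)
    have hψb : ∀ s ∈ Icc (0:ℝ) T, |ψ s| ≤ 2 * L * (c⁻¹ + c⁻¹) := by
      intro s hs
      simp only [hψ_def]
      rw [abs_mul]
      refine mul_le_mul (hfb s hs) ?_ (abs_nonneg _) (by positivity)
      calc |(x s)⁻¹ - (x pb)⁻¹| ≤ |(x s)⁻¹| + |(x pb)⁻¹| := abs_sub _ _
        _ ≤ c⁻¹ + c⁻¹ := add_le_add (hxinv_le s hs) (hxinv_le pb hpb)
    have hψint : IntervalIntegrable ψ volume pa pb :=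
      stmt19_ii_of_bdd ψ (2 * L * (c⁻¹ + c⁻¹)) hψA hψb hpa hpb
    have hsplit : (∫ s in pa..pb, φ s)
        = (∫ s in pa..pb, f s) * (x pb)⁻¹ + ∫ s in pa..pb, ψ s := by
      rw [← intervalIntegral.integral_mul_const]
      rw [← intervalIntegral.integral_add ((hfint pa pb hpa hpb).mul_const _) hψint]
      apply intervalIntegral.integral_congr
      intro s _
      simp only [hφ_def, hψ_def]; ring
    have hlog : (x pb - x pa) * (x pb)⁻¹ ≤ Real.log (x pb) - Real.log (x pa) := by
      have h := Real.log_le_sub_one_of_pos (div_pos hxaP hxbP)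
      rw [Real.log_div hxaP.ne' hxbP.ne'] at h
      have e : (x pb - x pa) * (x pb)⁻¹ = 1 - x pa / x pb := by
        field_simp
      rw [e]; linarith
    have hψbound : ∀ s ∈ Set.uIoc pa pb,
        ‖ψ s‖ ≤ 2 * L * (2 * L * (pb - pa)) * (c⁻¹ * c⁻¹) := by
      intro s hs
      rw [Set.uIoc_of_le hab] at hs
      have hsIcc : s ∈ Icc (0:ℝ) T := ⟨hpa.1.trans hs.1.le, hs.2.trans hpb.2⟩
      have hxsP : 0 < x s := hxlb1 s hsIcc
      have hinveq : (x s)⁻¹ - (x pb)⁻¹ = (x pb - x s) / (x s * x pb) :=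
        inv_sub_inv hxsP.ne' hxbP.ne'
      rw [Real.norm_eq_abs]
      simp only [hψ_def]
      rw [abs_mul, hinveq, abs_div, div_eq_mul_inv]
      have h1 : |f s| ≤ 2 * L := hfb s hsIcc
      have h2 : |x pb - x s| ≤ 2 * L * (pb - pa) := by
        refine (hxlip s pb hsIcc hpb hs.2).trans ?_
        have : (0:ℝ) ≤ 2 * L := by positivity
        nlinarith [hs.1]
      have h3 : |x s * x pb|⁻¹ ≤ c⁻¹ * c⁻¹ := by
        rw [abs_of_pos (mul_pos hxsP hxbP), ← mul_inv]
        refine inv_anti₀ (by positivity) ?_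
        exact mul_le_mul (hxlb s hsIcc) (hxlb pb hpb) hc0.le hxsP.le
      calc |f s| * (|x pb - x s| * |x s * x pb|⁻¹)
          ≤ (2 * L) * ((2 * L * (pb - pa)) * (c⁻¹ * c⁻¹)) := by
            refine mul_le_mul h1 ?_ (by positivity) (by positivity)
            refine mul_le_mul h2 h3 (by positivity) ?_
            nlinarith [hLpos, hs.1, hab]
        _ = 2 * L * (2 * L * (pb - pa)) * (c⁻¹ * c⁻¹) := by ring
    have h2int := intervalIntegral.norm_integral_le_of_norm_le_const hψbound
    rw [Real.norm_eq_abs, abs_of_nonneg (sub_nonneg.2 hab)] at h2int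
    have h2le : (∫ s in pa..pb, ψ s)
        ≤ 2 * L * (2 * L * (pb - pa)) * (c⁻¹ * c⁻¹) * (pb - pa) :=
      le_trans (le_abs_self _) h2int
    rw [hsplit, ← hint_f]
    nlinarith [hlog, h2le]
  -- Riemann sum bound
  have hmain : ∀ n : ℕ, 0 < n →
      (∫ s in (0:ℝ)..T, φ s) ≤ 4 * L ^ 2 * (c⁻¹ * c⁻¹) * T ^ 2 / n := by
    intro n hn
    have hn' : (0:ℝ) < n := Nat.cast_pos.2 hn
    set a : ℕ → ℝ := fun i => (i : ℝ) * (T / n) with ha_def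
    have hamem : ∀ i, i ≤ n → a i ∈ Icc (0:ℝ) T := by
      intro i hi
      constructor
      · have : (0:ℝ) ≤ (i : ℝ) := Nat.cast_nonneg i
        have : (0:ℝ) ≤ T / n := le_of_lt (div_pos hT hn')
        simp only [ha_def]
        positivity
      · simp only [ha_def]
        calc (i : ℝ) * (T / n) ≤ (n : ℝ) * (T / n) := by
              refine mul_le_mul_of_nonneg_right ?_ (le_of_lt (div_pos hT hn'))
              exact_mod_cast hi
          _ = T := by field_simp
    have hstep : ∀ i : ℕ, a (i + 1) - a i = T / n := by
      intro i; simp only [ha_def]; push_cast; ring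
    have hstep_le : ∀ i : ℕ, a i ≤ a (i + 1) := by
      intro i
      have : (0:ℝ) ≤ T / n := le_of_lt (div_pos hT hn')
      have h := hstep i; linarith
    have haii : ∀ i < n, IntervalIntegrable φ volume (a i) (a (i + 1)) :=
      fun i hi => hφint _ _ (hamem i hi.le) (hamem (i + 1) hi)
    have hsum := intervalIntegral.sum_integral_adjacent_intervals haii
    have ha0 : a 0 = 0 := by simp [ha_def]
    have han : a n = T := by simp only [ha_def]; field_simp
    have hbound : ∀ i ∈ Finset.range n, (∫ s in a i..a (i + 1), φ s) ≤
        (Real.log (x (a (i + 1))) - Real.log (x (a i)))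
          + 4 * L ^ 2 * (c⁻¹ * c⁻¹) * (T / n) ^ 2 := by
      intro i hi
      rw [Finset.mem_range] at hi
      have h := hpiece (a i) (a (i + 1)) (hamem i hi.le) (hamem (i + 1) hi)
        (hstep_le i)
      rwa [hstep i] at h
    have hsum_le := Finset.sum_le_sum hbound
    rw [hsum] at hsum_le
    rw [ha0, han] at hsum_le
    rw [Finset.sum_add_distrib, Finset.sum_range_sub
      (fun i => Real.log (x (a i))), Finset.sum_const, Finset.card_range] at hsum_le
    rw [ha0, han, ← hper, nsmul_eq_mul] at hsum_le
    have heq : (n : ℝ) * (4 * L ^ 2 * (c⁻¹ * c⁻¹) * (T / n) ^ 2)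
        = 4 * L ^ 2 * (c⁻¹ * c⁻¹) * T ^ 2 / n := by
      field_simp
    rw [heq] at hsum_le
    linarith
  -- conclude the log-integral inequality
  have hφ0 : (∫ s in (0:ℝ)..T, φ s) ≤ 0 := by
    by_contra hcon; push_neg at hcon
    set I := ∫ s in (0:ℝ)..T, φ s with hI_def
    obtain ⟨n, hns⟩ := exists_nat_gt (max 1 (4 * L ^ 2 * (c⁻¹ * c⁻¹) * T ^ 2 / I))
    have hn1 : (1:ℝ) < n := lt_of_le_of_lt (le_max_left _ _) hns
    have hn0 : 0 < n := by
      by_contra h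
      push_neg at h
      interval_cases n
      · norm_num at hn1
    have hn' : (0:ℝ) < n := Nat.cast_pos.2 hn0
    have hle := hmain n hn0
    have hlt : 4 * L ^ 2 * (c⁻¹ * c⁻¹) * T ^ 2 / I < n :=
      lt_of_le_of_lt (le_max_right _ _) hns
    rw [div_lt_iff₀ hcon] at hlt
    rw [le_div_iff₀ hn'] at hle
    nlinarith [hle, hlt, mul_comm I (n:ℝ)]
  -- integrand pieces
  set g0 : ℝ → ℝ := fun s => u₀ s * (1 - x s) with hg0_def
  set g1 : ℝ → ℝ := fun s => u₁ s * x s with hg1_def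
  set q0 : ℝ → ℝ := fun s => u₀ s * x s with hq0_def
  set r0 : ℝ → ℝ := fun s => u₀ s * (1 - x s) ^ 2 * (x s)⁻¹ with hr0_def
  have hg0b : ∀ s ∈ Icc (0:ℝ) T, |g0 s| ≤ L := by
    intro s hs
    have h₀ := hb0 s hs; have hx := hx01 s hs
    simp only [hg0_def]
    rw [abs_le]
    constructor
    · nlinarith [mul_nonneg (hℓ.le.trans h₀.1) (sub_nonneg.2 hx.2)]
    · nlinarith [mul_nonneg (sub_nonneg.2 h₀.2) (sub_nonneg.2 hx.2),
        mul_nonneg hLpos.le hx.1]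
  have hg1b : ∀ s ∈ Icc (0:ℝ) T, |g1 s| ≤ L := by
    intro s hs
    have h₁ := hb1 s hs; have hx := hx01 s hs
    simp only [hg1_def]
    rw [abs_le]
    constructor
    · nlinarith [mul_nonneg (hℓ.le.trans h₁.1) hx.1]
    · nlinarith [mul_nonneg (sub_nonneg.2 h₁.2) hx.1,
        mul_nonneg hLpos.le (sub_nonneg.2 hx.2)]
  have hq0b : ∀ s ∈ Icc (0:ℝ) T, |q0 s| ≤ L := by
    intro s hs
    have h₀ := hb0 s hs; have hx := hx01 s hs
    simp only [hq0_def]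
    rw [abs_le]
    constructor
    · nlinarith [mul_nonneg (hℓ.le.trans h₀.1) hx.1]
    · nlinarith [mul_nonneg (sub_nonneg.2 h₀.2) hx.1,
        mul_nonneg hLpos.le (sub_nonneg.2 hx.2)]
  have hr0b : ∀ s ∈ Icc (0:ℝ) T, |r0 s| ≤ L * c⁻¹ := by
    intro s hs
    have h₀ := hb0 s hs; have hx := hx01 s hs
    have hxs := hxlb1 s hs
    have hu0nn : 0 ≤ u₀ s := hℓ.le.trans h₀.1
    have hsq : (1 - x s) ^ 2 ≤ 1 := by nlinarith [hx.1, hx.2]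
    have hnn : 0 ≤ r0 s := by
      simp only [hr0_def]; positivity
    rw [abs_of_nonneg hnn]
    simp only [hr0_def]
    have h1 : u₀ s * (1 - x s) ^ 2 ≤ L := by
      nlinarith [mul_le_mul h₀.2 hsq (sq_nonneg _) hLpos.le]
    have h2 : (x s)⁻¹ ≤ c⁻¹ := le_trans (le_abs_self _) (hxinv_le s hs)
    exact mul_le_mul h1 h2 (inv_nonneg.2 hxs.le) hLpos.le
  have hxA' := hxA
  have hg0A : AEMeasurable g0 (volume.restrict (Icc 0 T)) :=
    hm0.aemeasurable.mul (aemeasurable_const.sub hxA')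
  have hg1A : AEMeasurable g1 (volume.restrict (Icc 0 T)) :=
    hm1.aemeasurable.mul hxA'
  have hq0A : AEMeasurable q0 (volume.restrict (Icc 0 T)) :=
    hm0.aemeasurable.mul hxA'
  have hr0A : AEMeasurable r0 (volume.restrict (Icc 0 T)) :=
    (hm0.aemeasurable.mul ((aemeasurable_const.sub hxA').pow aemeasurable_const)).mul
      hxA'.inv
  have hg0int : IntervalIntegrable g0 volume 0 T :=
    stmt19_ii_of_bdd g0 L hg0A hg0b h0mem hTmem
  have hg1int : IntervalIntegrable g1 volume 0 T :=
    stmt19_ii_of_bdd g1 L hg1A hg1b h0mem hTmem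
  have hq0int : IntervalIntegrable q0 volume 0 T :=
    stmt19_ii_of_bdd q0 L hq0A hq0b h0mem hTmem
  have hr0int : IntervalIntegrable r0 volume 0 T :=
    stmt19_ii_of_bdd r0 (L * c⁻¹) hr0A hr0b h0mem hTmem
  have hu0b : ∀ s ∈ Icc (0:ℝ) T, |u₀ s| ≤ L := by
    intro s hs; have h₀ := hb0 s hs
    rw [abs_le]; exact ⟨by linarith [h₀.1], h₀.2⟩
  have hu1b : ∀ s ∈ Icc (0:ℝ) T, |u₁ s| ≤ L := by
    intro s hs; have h₁ := hb1 s hs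
    rw [abs_le]; exact ⟨by linarith [h₁.1], h₁.2⟩
  have hu0int : IntervalIntegrable u₀ volume 0 T :=
    stmt19_ii_of_bdd u₀ L hm0.aemeasurable hu0b h0mem hTmem
  have hu1int : IntervalIntegrable u₁ volume 0 T :=
    stmt19_ii_of_bdd u₁ L hm1.aemeasurable hu1b h0mem hTmem
  set P := ∫ s in (0:ℝ)..T, g0 s with hP_def
  set Q := ∫ s in (0:ℝ)..T, q0 s with hQ_def
  set R := ∫ s in (0:ℝ)..T, r0 s with hR_def
  -- identity A : ∫ g1 = ∫ g0
  have hfzero : (∫ s in (0:ℝ)..T, f s) = 0 := by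
    have h := hode T hTmem; rw [← hper] at h; linarith
  have hP1 : (∫ s in (0:ℝ)..T, g1 s) = P := by
    have hsub : (∫ s in (0:ℝ)..T, f s)
        = P - ∫ s in (0:ℝ)..T, g1 s := by
      rw [hP_def, ← intervalIntegral.integral_sub hg0int hg1int]
    linarith
  -- decomposition of ∫ u₀
  have hI0 : (∫ t in (0:ℝ)..T, u₀ t) = P + Q := by
    rw [hP_def, hQ_def, ← intervalIntegral.integral_add hg0int hq0int]
    apply intervalIntegral.integral_congr
    intro s _
    simp only [hg0_def, hq0_def]; ring
  -- decomposition of the log integral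
  have hSdecomp : (∫ s in (0:ℝ)..T, φ s)
      = (P + R) - ∫ t in (0:ℝ)..T, u₁ t := by
    rw [hP_def, hR_def, ← intervalIntegral.integral_add hg0int hr0int,
      ← intervalIntegral.integral_sub (hg0int.add hr0int) hu1int]
    apply intervalIntegral.integral_congr
    intro s hs
    rw [uIcc_of_le hT.le] at hs
    have hxs := (hxlb1 s hs).ne'
    simp only [hφ_def, hf_def, hg0_def, hr0_def]
    field_simp
    ring
  -- positivity of Q
  have hQlb : ℓ * c * T ≤ Q := by
    have hq0lb : ∀ s ∈ Icc (0:ℝ) T, ℓ * c ≤ q0 s := by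
      intro s hs
      have h₀ := hb0 s hs
      simp only [hq0_def]
      exact mul_le_mul h₀.1 (hxlb s hs) hc0.le (hℓ.le.trans h₀.1)
    have h := integral_mono_on hT.le intervalIntegrable_const hq0int hq0lb
    rwa [intervalIntegral.integral_const, sub_zero, smul_eq_mul, mul_comm] at h
  have hQpos : 0 < Q := lt_of_lt_of_le (by positivity) hQlb
  -- Cauchy–Schwarz : P^2 ≤ Q * R
  have hCS : P ^ 2 ≤ Q * R := by
    set tt := P / Q with htt_def
    have hnn : 0 ≤ ∫ s in (0:ℝ)..T, (tt ^ 2 * q0 s - 2 * tt * g0 s + r0 s) := by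
      apply intervalIntegral.integral_nonneg hT.le
      intro s hs
      have h₀ := hb0 s hs
      have hxs := hxlb1 s hs
      have hu0nn : 0 ≤ u₀ s := hℓ.le.trans h₀.1
      have hkey : tt ^ 2 * q0 s - 2 * tt * g0 s + r0 s
          = u₀ s * (tt * x s - (1 - x s)) ^ 2 * (x s)⁻¹ := by
        simp only [hq0_def, hg0_def, hr0_def]
        field_simp
        ring
      rw [hkey]
      positivity
    have hsplitint : (∫ s in (0:ℝ)..T, (tt ^ 2 * q0 s - 2 * tt * g0 s + r0 s))
        = tt ^ 2 * Q - 2 * tt * P + R := by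
      rw [hP_def, hQ_def, hR_def]
      rw [intervalIntegral.integral_add ((hq0int.const_mul _).sub
        (hg0int.const_mul _)) hr0int]
      rw [intervalIntegral.integral_sub (hq0int.const_mul _) (hg0int.const_mul _)]
      rw [intervalIntegral.integral_const_mul, intervalIntegral.integral_const_mul]
    rw [hsplitint] at hnn
    have he : tt ^ 2 * Q - 2 * tt * P + R = R - P ^ 2 / Q := by
      rw [htt_def]; field_simp; ring
    rw [he] at hnn
    have : P ^ 2 / Q ≤ R := by linarith
    calc P ^ 2 = (P ^ 2 / Q) * Q := by field_simp
      _ ≤ R * Q := mul_le_mul_of_nonneg_right this hQpos.le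
      _ = Q * R := mul_comm _ _
  -- throughput bound
  have hI1ge : P + R ≤ ∫ t in (0:ℝ)..T, u₁ t := by linarith [hφ0, hSdecomp]
  have hPnn : 0 ≤ P := by
    rw [← hP1]
    apply intervalIntegral.integral_nonneg hT.le
    intro s hs
    have h₁ := hb1 s hs; have hx := hx01 s hs
    simp only [hg1_def]
    exact mul_nonneg (hℓ.le.trans h₁.1) hx.1
  have hRnn : 0 ≤ R := by
    rw [hR_def]
    apply intervalIntegral.integral_nonneg hT.le
    intro s hs
    have h₀ := hb0 s hs
    have hxs := hxlb1 s hs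
    have hu0nn : 0 ≤ u₀ s := hℓ.le.trans h₀.1
    simp only [hr0_def]
    positivity
  have hI0' : (∫ t in (0:ℝ)..T, u₀ t) = T * ubar0 := by
    rw [← havg0]; field_simp
  have hI1' : (∫ t in (0:ℝ)..T, u₁ t) = T * ubar1 := by
    rw [← havg1]; field_simp
  have e0 : T * ubar0 = P + Q := by rw [← hI0']; exact hI0
  have e1 : P + R ≤ T * ubar1 := by rw [← hI1']; exact hI1ge
  have hkey2 : P * (T * ubar0 + T * ubar1) ≤ (T * ubar0) * (T * ubar1) := by
    nlinarith [hCS, hQpos, hPnn, hRnn, e0, e1,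
      mul_le_mul_of_nonneg_left e1 hQpos.le]
  have hgoal_eq : (∫ t in (0:ℝ)..T, u₁ t * x t) = P := by
    rw [← hP1]
  rw [hgoal_eq]
  have hsum01 : 0 < ubar0 + ubar1 := by
    have := h0.1; have := h1.1; linarith
  rw [show (1/T) * P = P / T from by ring, div_le_div_iff₀ hT hsum01]
  have h3 : T * (P * (ubar0 + ubar1)) ≤ T * (ubar0 * ubar1 * T) := by
    nlinarith [hkey2]
  exact le_of_mul_le_mul_left h3 hT

end Main

/-- Main theorem: among all measurable controls u₀, u₁ : [0,T] → [ℓ,L] with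
averages ū₀, ū₁ ∈ (ℓ,L), and all periodic trajectories x of ẋ = u₀(1−x) − u₁x valued in
[0,1], the average throughput (1/T)∫ u₁x is at most ū₀ū₁/(ū₀+ū₁), with equality attained by
constant controls u₀ ≡ ū₀, u₁ ≡ ū₁ and the constant state x ≡ ū₀/(ū₀+ū₁). -/
theorem stmt19 (T ℓ L ubar0 ubar1 : ℝ) (hT : 0 < T) (hℓ : 0 < ℓ) (hℓL : ℓ < L)
    (h0 : ubar0 ∈ Set.Ioo ℓ L) (h1 : ubar1 ∈ Set.Ioo ℓ L) :
    (∀ u₀ u₁ x : ℝ → ℝ,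
      Measurable u₀ → Measurable u₁ →
      (∀ t ∈ Set.Icc 0 T, u₀ t ∈ Set.Icc ℓ L) →
      (∀ t ∈ Set.Icc 0 T, u₁ t ∈ Set.Icc ℓ L) →
      (1 / T) * (∫ t in (0:ℝ)..T, u₀ t) = ubar0 →
      (1 / T) * (∫ t in (0:ℝ)..T, u₁ t) = ubar1 →
      ContinuousOn x (Set.Icc 0 T) →
      (∀ t ∈ Set.Icc 0 T, x t ∈ Set.Icc (0:ℝ) 1) →
      (∀ t ∈ Set.Icc 0 T,
        x t = x 0 + ∫ s in (0:ℝ)..t, (u₀ s * (1 - x s) - u₁ s * x s)) →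
      x 0 = x T →
      (1 / T) * (∫ t in (0:ℝ)..T, u₁ t * x t) ≤ ubar0 * ubar1 / (ubar0 + ubar1)) ∧
    ((1 / T) * (∫ _t in (0:ℝ)..T, ubar1 * (ubar0 / (ubar0 + ubar1)))
        = ubar0 * ubar1 / (ubar0 + ubar1) ∧
      (1 / T) * (∫ _t in (0:ℝ)..T, ubar0) = ubar0 ∧
      (1 / T) * (∫ _t in (0:ℝ)..T, ubar1) = ubar1 ∧
      ∀ t ∈ Set.Icc 0 T,
        ubar0 / (ubar0 + ubar1)
          = ubar0 / (ubar0 + ubar1)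
            + ∫ _s in (0:ℝ)..t,
              (ubar0 * (1 - ubar0 / (ubar0 + ubar1))
                - ubar1 * (ubar0 / (ubar0 + ubar1)))) := by
  have hsum : 0 < ubar0 + ubar1 := by
    have := h0.1; have := h1.1; linarith
  constructor
  · intro u₀ u₁ x hm0 hm1 hb0 hb1 havg0 havg1 hxc hx01 hode hper
    exact stmt19_key hT hℓ hℓL h0 h1 hm0 hm1 hb0 hb1 havg0 havg1 hxc hx01 hode hper
  refine ⟨?_, ?_, ?_, ?_⟩
  · rw [intervalIntegral.integral_const, sub_zero, smul_eq_mul]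
    field_simp
  · rw [intervalIntegral.integral_const, sub_zero, smul_eq_mul]
    field_simp
  · rw [intervalIntegral.integral_const, sub_zero, smul_eq_mul]
    field_simp
  · intro t ht
    have hz : ubar0 * (1 - ubar0 / (ubar0 + ubar1))
        - ubar1 * (ubar0 / (ubar0 + ubar1)) = 0 := by
      field_simp
      ring
    rw [hz]
    simp
end
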